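/- arXiv:2209.03054 — 2 statements merged into one kernel-verified Lean document; each statement's English description precedes it below -/
import Mathlib

section
/- Suppose u : 2^[n] → ℝ≥0 is a normalized, monotone set function and c : 2^[n] → ℝ≥0 is modular with positive singleton costs c_1,…,c_n. Then any permutation of [n] that lists the elements i ∈ [n] in non-decreasing order of c_i has objective value at most n times the minimum objective value over all permutations of [n]. -/
/-!
Both objectives are integrals of step functions over the same interval `[u ∅, u [n]]`: the
objective of `L` pays `c(L_{i+1})` per unit of `u` on `[u(L_i), u(L_{i+1})]`, and likewise for `O`.
Cutting these steps along their pairwise overlaps, it suffices to compare the two rates wherever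
a step of `L` meets a step of `O`. If the `i`-th step of `L` meets the `k`-th step of `O`, then
`u(L_i) < u(O_{k+1})`, so by monotonicity `O_{k+1}` contains some `x ∉ L_i`; since `L` is sorted by
cost, every element of `L_{i+1}` costs at most `c_x`, whence `c(L_{i+1}) ≤ n c_x ≤ n c(O_{k+1})`.
-/

open Finset

/-- The set of the first `k` elements of the list `L`. -/
def prefSet {n : ℕ} (L : List (Fin n)) (k : ℕ) : Finset (Fin n) := (L.take k).toFinset

/-- Marginal value `f(e|S) = f(S ∪ {e}) - f S`. -/
noncomputable def marg {n : ℕ} (f : Finset (Fin n) → ℝ) (e : Fin n) (S : Finset (Fin n)) : ℝ :=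
  f (insert e S) - f S

/-- `L` is a listing of all elements of `[n]` (a permutation of `[n]`). -/
def IsPermList {n : ℕ} (L : List (Fin n)) : Prop := L.Nodup ∧ ∀ x : Fin n, x ∈ L

/-- The objective value `∑_{i=1}^n c(S_i)(u(S_i) - u(S_{i-1}))`. -/
noncomputable def objective {n : ℕ} (u c : Finset (Fin n) → ℝ) (L : List (Fin n)) : ℝ :=
  ∑ i ∈ Finset.range L.length,
    c (prefSet L (i + 1)) * (u (prefSet L (i + 1)) - u (prefSet L i))

/-- The element in (1-indexed) position `k` of the list `L`. -/
def elemAt {n : ℕ} [NeZero n] (L : List (Fin n)) (k : ℕ) : Fin n := L.getD (k - 1) default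

/-- The quantity `b_{ij} = u(o_i | O_{i-1} ∪ L_{j-1}) - u(o_i | O_{i-1} ∪ L_{j-1} ∪ {l_j})`. -/
noncomputable def bmat {n : ℕ} [NeZero n] (u : Finset (Fin n) → ℝ) (L O : List (Fin n))
    (i j : ℕ) : ℝ :=
  marg u (elemAt O i) (prefSet O (i - 1) ∪ prefSet L (j - 1)) -
    marg u (elemAt O i) (insert (elemAt L j) (prefSet O (i - 1) ∪ prefSet L (j - 1)))

/-- Monotone set function. -/
def Mono {n : ℕ} (f : Finset (Fin n) → ℝ) : Prop :=
  ∀ S : Finset (Fin n), ∀ i : Fin n, f S ≤ f (insert i S)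

/-- Submodular set function. -/
def Submod {n : ℕ} (f : Finset (Fin n) → ℝ) : Prop :=
  ∀ S : Finset (Fin n), ∀ i j : Fin n, i ∉ S → j ∉ S →
    marg f i (insert j S) ≤ marg f i S

/-- Second-order supermodular set function. -/
def SOSupermod {n : ℕ} (f : Finset (Fin n) → ℝ) : Prop :=
  ∀ S : Finset (Fin n), ∀ i j k : Fin n, i ∉ S → j ∉ S → k ∉ S →
    marg f i (insert k S) - marg f i (insert j (insert k S)) ≤
      marg f i S - marg f i (insert j S)

/-- Objective value of a length-(n+1) pseudo-neighbor sequence, where costs are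
counted with multiplicity via the singleton costs `cs`. -/
noncomputable def pseudoObj {n : ℕ} (u : Finset (Fin n) → ℝ) (cs : Fin n → ℝ)
    (P : List (Fin n)) : ℝ :=
  ∑ k ∈ Finset.range P.length,
    (((P.take (k + 1)).map cs).sum) * (u (prefSet P (k + 1)) - u (prefSet P k))

/-- The pseudo-neighbor of `L` obtained by inserting a second copy of the element in
(1-indexed) position `i` at (1-indexed) position `j`. -/
def pseudoNeighbor {n : ℕ} [NeZero n] (L : List (Fin n)) (i j : ℕ) : List (Fin n) :=
  L.insertIdx (j - 1) (elemAt L i)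

/-- `L` is locally optimal with respect to insertions: no pseudo-neighbor has strictly
smaller objective value. -/
def LocallyOptimalInsertions {n : ℕ} [NeZero n] (u c : Finset (Fin n) → ℝ) (cs : Fin n → ℝ)
    (L : List (Fin n)) : Prop :=
  ∀ i j : ℕ, 1 ≤ j → j < i → i ≤ n →
    objective u c L ≤ pseudoObj u cs (pseudoNeighbor L i j)

/-- The list obtained from `L` by removing the element in (1-indexed) position `i` and
reinserting it at (1-indexed) position `j`. -/
def moveList {n : ℕ} [NeZero n] (L : List (Fin n)) (i j : ℕ) : List (Fin n) :=
  (L.eraseIdx (i - 1)).insertIdx (j - 1) (elemAt L i)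

/-- `L'` is a move-neighbor of `L`. -/
def IsMoveNeighbor {n : ℕ} [NeZero n] (L L' : List (Fin n)) : Prop :=
  ∃ i j : ℕ, 1 ≤ i ∧ i ≤ n ∧ 1 ≤ j ∧ j ≤ n ∧ i ≠ j ∧ L' = moveList L i j

theorem List.Pairwise.rel_of_mem_take_succ {α : Type*} {r : α → α → Prop} [Std.Refl r]
    {L : List α} (hL : L.Pairwise r) {i : ℕ} {x y : α} (hy : y ∈ L.take (i + 1)) (hx : x ∈ L)
    (hxi : x ∉ L.take i) : r y x := by
  obtain ⟨p, hp, rfl⟩ := List.mem_take_iff_getElem.1 hy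
  obtain ⟨q, hq, rfl⟩ := List.mem_iff_getElem.1 hx
  have hiq : i ≤ q := by
    by_contra! h
    exact hxi (List.mem_take_iff_getElem.2 ⟨q, by omega, rfl⟩)
  exact hL.rel_get_of_le (a := ⟨p, by omega⟩) (b := ⟨q, hq⟩) (by rw [Fin.mk_le_mk]; omega)

def overlapLength (a a' b b' : ℝ) : ℝ := max 0 (min a' b' - max a b)

theorem overlapLength_comm (a a' b b' : ℝ) : overlapLength a a' b b' = overlapLength b b' a a' := by
  rw [overlapLength, overlapLength, min_comm, max_comm a]

theorem overlapLength_eq_sub {a a' b b' : ℝ} (ha : a ≤ a') (hb : b ≤ b') :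
    overlapLength a a' b b' = max a (min a' b') - max a (min a' b) := by
  simp only [overlapLength, max_def, min_def]
  split_ifs <;> linarith

theorem sum_overlapLength_eq_sub {b : ℕ → ℝ} (hb : Monotone b) {a a' : ℝ} {m : ℕ} (ha : a ≤ a')
    (h0 : b 0 ≤ a) (hm : a' ≤ b m) :
    ∑ k ∈ range m, overlapLength a a' (b k) (b (k + 1)) = a' - a := by
  rw [sum_congr rfl fun k _ => overlapLength_eq_sub ha (hb k.le_succ),
    sum_range_sub (fun k => max a (min a' (b k))), min_eq_left hm, min_eq_right (h0.trans ha),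
    max_eq_right ha, max_eq_left h0]

theorem mul_overlapLength_le_mul {a a' b b' x y : ℝ} (h : a < b' → b < a' → x ≤ y) :
    x * overlapLength a a' b b' ≤ y * overlapLength a a' b b' := by
  rcases (le_max_left 0 (min a' b' - max a b)).eq_or_lt with hzero | hpos
  · simp [overlapLength, ← hzero]
  · obtain ⟨ha, hb⟩ :=
      max_lt_iff.1 (sub_pos.1 ((lt_max_iff.1 hpos).resolve_left (lt_irrefl 0)))
    exact mul_le_mul_of_nonneg_right (h (lt_min_iff.1 ha).2 (lt_min_iff.1 hb).1) hpos.le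

theorem sum_mul_sub_le_of_overlap {a b x y : ℕ → ℝ} {m m' : ℕ} (ha : Monotone a)
    (hb : Monotone b) (h0 : a 0 = b 0) (hend : a m = b m')
    (hxy : ∀ i k, a i < b (k + 1) → b k < a (i + 1) → x i ≤ y k) :
    ∑ i ∈ range m, x i * (a (i + 1) - a i) ≤ ∑ k ∈ range m', y k * (b (k + 1) - b k) := by
  set w := fun i k => overlapLength (a i) (a (i + 1)) (b k) (b (k + 1))
  have row : ∀ i ∈ range m, ∑ k ∈ range m', w i k = a (i + 1) - a i := fun i hi =>
    sum_overlapLength_eq_sub hb (ha i.le_succ) (h0 ▸ ha i.zero_le)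
      (hend ▸ ha (mem_range.1 hi))
  have col : ∀ k ∈ range m', ∑ i ∈ range m, w i k = b (k + 1) - b k := fun k hk => by
    simp only [w, overlapLength_comm (a _)]
    exact sum_overlapLength_eq_sub ha (hb k.le_succ) (h0 ▸ hb k.zero_le)
      (hend ▸ hb (mem_range.1 hk))
  calc ∑ i ∈ range m, x i * (a (i + 1) - a i)
      = ∑ i ∈ range m, ∑ k ∈ range m', x i * w i k :=
        sum_congr rfl fun i hi => by rw [← row i hi, mul_sum]
    _ ≤ ∑ i ∈ range m, ∑ k ∈ range m', y k * w i k :=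
        sum_le_sum fun i _ => sum_le_sum fun k _ => mul_overlapLength_le_mul (hxy i k)
    _ = ∑ k ∈ range m', y k * (b (k + 1) - b k) := by
        rw [sum_comm]
        exact sum_congr rfl fun k hk => by rw [← col k hk, mul_sum]

section SetFunction

variable {n : ℕ}

theorem Mono.monotone {f : Finset (Fin n) → ℝ} (hf : Mono f) : Monotone f := by
  have le_union : ∀ S A : Finset (Fin n), f S ≤ f (A ∪ S) := fun S A => by
    induction A using Finset.induction_on with
    | empty => simp
    | insert a A _ ih => rw [insert_union]; exact ih.trans (hf _ a)
  intro S T hST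
  rw [← sdiff_union_of_subset hST]
  exact le_union S (T \ S)

theorem prefSet_zero (L : List (Fin n)) : prefSet L 0 = ∅ := by
  simp [prefSet]

theorem prefSet_mono (L : List (Fin n)) : Monotone (prefSet L) := fun _ _ h _ hx =>
  List.mem_toFinset.2 (List.take_subset_take_left L h (List.mem_toFinset.1 hx))

theorem prefSet_length_eq_univ {L : List (Fin n)} (hL : ∀ x, x ∈ L) :
    prefSet L L.length = univ := by
  ext x
  simp [prefSet, hL]

theorem sum_prefSet_succ_le_of_lt {u : Finset (Fin n) → ℝ} {cs : Fin n → ℝ}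
    (hu : Mono u) (hcs : ∀ i, 0 ≤ cs i) {L : List (Fin n)} (hL : ∀ x, x ∈ L)
    (hsorted : L.Pairwise (fun a b => cs a ≤ cs b)) {i : ℕ} {T : Finset (Fin n)}
    (h : u (prefSet L i) < u T) :
    ∑ y ∈ prefSet L (i + 1), cs y ≤ n * ∑ y ∈ T, cs y := by
  obtain ⟨x, hxT, hxL⟩ := not_subset.1 fun hsub => h.not_ge (hu.monotone hsub)
  have hle : ∀ y ∈ prefSet L (i + 1), cs y ≤ cs x := fun y hy =>
    hsorted.rel_of_mem_take_succ (List.mem_toFinset.1 hy) (hL x) (mt List.mem_toFinset.2 hxL)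
  calc ∑ y ∈ prefSet L (i + 1), cs y ≤ #(prefSet L (i + 1)) • cs x := sum_le_card_nsmul _ _ _ hle
    _ ≤ n * cs x := by
        rw [nsmul_eq_mul]
        gcongr
        · exact hcs x
        · exact_mod_cast card_finset_fin_le _
    _ ≤ n * ∑ y ∈ T, cs y := by
        gcongr
        exact single_le_sum (fun y _ => hcs y) hxT

end SetFunction

theorem nondecreasing_cost_n_approx_general (n : ℕ)
    (u c : Finset (Fin n) → ℝ) (cs : Fin n → ℝ)
    (hu_mono : Mono u)
    (hcs_pos : ∀ i, 0 < cs i) (hc : ∀ S, c S = ∑ i ∈ S, cs i)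
    (L : List (Fin n)) (hL : IsPermList L)
    (hsorted : L.Pairwise (fun a b => cs a ≤ cs b)) :
    ∀ O, IsPermList O → objective u c L ≤ n * objective u c O := by
  intro O hO
  have hmono : ∀ M : List (Fin n), Monotone fun k => u (prefSet M k) := fun M =>
    hu_mono.monotone.comp (prefSet_mono M)
  rw [objective, objective, mul_sum]
  simp only [hc, ← mul_assoc]
  exact sum_mul_sub_le_of_overlap (hmono L) (hmono O) (by simp only [prefSet_zero])
    (by rw [prefSet_length_eq_univ hL.2, prefSet_length_eq_univ hO.2])
    fun i k h _ => sum_prefSet_succ_le_of_lt hu_mono (fun j => (hcs_pos j).le) hL.2 hsorted h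

theorem nondecreasing_cost_n_approx (n : ℕ) [NeZero n]
    (u c : Finset (Fin n) → ℝ) (cs : Fin n → ℝ)
    (hu0 : u ∅ = 0) (hu_nonneg : ∀ S, 0 ≤ u S) (hu_mono : Mono u)
    (hcs_pos : ∀ i, 0 < cs i) (hc : ∀ S, c S = ∑ i ∈ S, cs i)
    (L : List (Fin n)) (hL : IsPermList L)
    (hsorted : L.Pairwise (fun a b => cs a ≤ cs b)) :
    ∀ O, IsPermList O → objective u c L ≤ n * objective u c O :=
  nondecreasing_cost_n_approx_general n u c cs hu_mono hcs_pos hc L hL hsorted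
end

section
/- Suppose u : 2^[n] → ℝ≥0 is a normalized, monotone set function and c : 2^[n] → ℝ≥0 is modular with positive singleton costs. Let π be a permutation of [n], let i > j be positions, and let π″ be the pseudo-neighbor of π obtained by inserting a second copy of the element in position i at position j. Then the move-neighbor of π obtained by removing the element in position i and reinserting it at position j has objective value at most the objective value of π″. Consequently, if π is locally optimal with respect to moves, then π is locally optimal with respect to insertions. -/
open Finset

/-!
With `e` the element in position `i` and `X` the first `i - 1` entries of `π` with `e` inserted
at position `j`, the move-neighbor is `X ++ C` and the pseudo-neighbor is `X ++ e :: C`, where `C`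
is the tail of `π` after position `i`. Since `e ∈ X`, the extra copy of `e` does not change any
prefix set, so the two objectives differ only in that every prefix of the pseudo-neighbor
extending past `X` also pays `cs e` on a nonnegative increment of `u`.
-/

theorem List.insertIdx_append_of_le_length {α : Type*} {l₁ : List α} (l₂ : List α) {k : ℕ}
    (hk : k ≤ l₁.length) (a : α) : (l₁ ++ l₂).insertIdx k a = l₁.insertIdx k a ++ l₂ := by
  induction l₁ generalizing k with
  | nil => simp_all
  | cons x xs ih =>
    cases k with
    | zero => rfl
    | succ k => simp [List.insertIdx_succ_cons, ih (Nat.le_of_succ_le_succ hk)]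

theorem IsPermList.length_eq {n : ℕ} {L : List (Fin n)} (hL : IsPermList L) : L.length = n :=
  calc L.length = L.toFinset.card := (List.toFinset_card_of_nodup hL.1).symm
    _ = n := by
      rw [Finset.eq_univ_of_forall fun x => List.mem_toFinset.2 (hL.2 x), card_univ,
        Fintype.card_fin]

section Objective

variable {n : ℕ} (u : Finset (Fin n) → ℝ) (cs : Fin n → ℝ)

theorem prefSet_append_of_le_length {L : List (Fin n)} (M : List (Fin n)) {k : ℕ}
    (hk : k ≤ L.length) : prefSet (L ++ M) k = prefSet L k := by
  rw [prefSet, List.take_append_of_le_length hk, prefSet]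

theorem objective_eq_pseudoObj_of_nodup (c : Finset (Fin n) → ℝ)
    (hc : ∀ S, c S = ∑ i ∈ S, cs i) {L : List (Fin n)} (hL : L.Nodup) :
    objective u c L = pseudoObj u cs L :=
  sum_congr rfl fun k _ => by
    rw [hc, prefSet, List.sum_toFinset _ (hL.sublist (List.take_sublist _ _))]

theorem pseudoObj_append_singleton (L : List (Fin n)) (a : Fin n) :
    pseudoObj u cs (L ++ [a]) =
      pseudoObj u cs L + ((L ++ [a]).map cs).sum * (u (insert a L.toFinset) - u L.toFinset) := by
  unfold pseudoObj
  rw [List.length_append, List.length_singleton, sum_range_succ]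
  congr 1
  · refine sum_congr rfl fun k hk => ?_
    have hk : k + 1 ≤ L.length := mem_range.1 hk
    rw [List.take_append_of_le_length hk, prefSet_append_of_le_length _ hk,
      prefSet_append_of_le_length _ (Nat.le_of_succ_le hk)]
  · rw [List.take_of_length_le (by simp), prefSet, List.take_of_length_le (by simp),
      prefSet_append_of_le_length _ le_rfl, prefSet, List.take_length, List.toFinset_append,
      Finset.union_comm, Finset.insert_eq]
    rfl

theorem pseudoObj_le_append_cons_of_mem (hu : Mono u) {e : Fin n} (he : 0 ≤ cs e)
    {X : List (Fin n)} (hX : e ∈ X) (C : List (Fin n)) :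
    pseudoObj u cs (X ++ C) ≤ pseudoObj u cs (X ++ e :: C) := by
  induction C using List.reverseRecOn with
  | nil =>
    rw [List.append_nil, pseudoObj_append_singleton,
      Finset.insert_eq_of_mem (List.mem_toFinset.2 hX), sub_self, mul_zero, add_zero]
  | append_singleton C a ih =>
    have hset : (X ++ e :: C).toFinset = (X ++ C).toFinset := by
      ext y
      simp only [List.mem_toFinset, List.mem_append, List.mem_cons]
      by_cases hy : y = e <;> simp_all
    have hcost : ((X ++ e :: C ++ [a]).map cs).sum = cs e + ((X ++ C ++ [a]).map cs).sum := by
      simp only [List.map_append, List.map_cons, List.sum_append, List.sum_cons]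
      ring
    have hgain : 0 ≤ u (insert a (X ++ C).toFinset) - u (X ++ C).toFinset :=
      sub_nonneg.2 (hu _ a)
    rw [← List.append_assoc, ← List.cons_append, ← List.append_assoc, pseudoObj_append_singleton,
      pseudoObj_append_singleton, hset, hcost]
    exact add_le_add ih (mul_le_mul_of_nonneg_right (le_add_of_nonneg_left he) hgain)

end Objective

section Neighbors

variable {n : ℕ} [NeZero n] {L : List (Fin n)} {i j : ℕ}

theorem elemAt_eq_getElem (hi : i - 1 < L.length) : elemAt L i = L[i - 1] :=
  List.getD_eq_getElem L default hi

theorem moveList_perm (hji : j < i) (hiL : i ≤ L.length) : (moveList L i j).Perm L := by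
  have hi : i - 1 < L.length := by omega
  refine (List.perm_insertIdx _ _ ?_).trans ?_
  · rw [List.length_eraseIdx_of_lt hi]
    omega
  · rw [elemAt_eq_getElem hi]
    exact List.getElem_cons_eraseIdx_perm hi

theorem moveList_eq_append (hji : j < i) (hiL : i ≤ L.length) :
    moveList L i j = (L.take (i - 1)).insertIdx (j - 1) (elemAt L i) ++ L.drop i := by
  rw [moveList, List.eraseIdx_eq_take_drop_succ, Nat.sub_add_cancel (by omega : 1 ≤ i),
    List.insertIdx_append_of_le_length _ (by simp; omega)]

theorem pseudoNeighbor_eq_append (hji : j < i) (hiL : i ≤ L.length) :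
    pseudoNeighbor L i j =
      (L.take (i - 1)).insertIdx (j - 1) (elemAt L i) ++ elemAt L i :: L.drop i := by
  have hi : i - 1 < L.length := by omega
  have hsplit : L = L.take (i - 1) ++ elemAt L i :: L.drop i := by
    conv_lhs => rw [← List.take_append_drop (i - 1) L]
    rw [List.drop_eq_getElem_cons hi, elemAt_eq_getElem hi, Nat.sub_add_cancel (by omega : 1 ≤ i)]
  rw [pseudoNeighbor]
  nth_rw 1 [hsplit]
  exact List.insertIdx_append_of_le_length _ (by simp; omega) _

end Neighbors

theorem objective_moveList_le_pseudoObj {n : ℕ} [NeZero n] (u c : Finset (Fin n) → ℝ)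
    (cs : Fin n → ℝ) (hu : Mono u) (hcs : ∀ i, 0 ≤ cs i) (hc : ∀ S, c S = ∑ i ∈ S, cs i)
    {L : List (Fin n)} (hL : L.Nodup) {i j : ℕ} (hji : j < i) (hiL : i ≤ L.length) :
    objective u c (moveList L i j) ≤ pseudoObj u cs (pseudoNeighbor L i j) := by
  rw [objective_eq_pseudoObj_of_nodup u cs c hc ((moveList_perm hji hiL).nodup_iff.2 hL),
    moveList_eq_append hji hiL, pseudoNeighbor_eq_append hji hiL]
  refine pseudoObj_le_append_cons_of_mem u cs hu (hcs _) ?_ _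
  exact (List.mem_insertIdx (by simp; omega)).2 (Or.inl rfl)

theorem move_neighbor_le_pseudo_neighbor_general (n : ℕ) [NeZero n]
    (u c : Finset (Fin n) → ℝ) (cs : Fin n → ℝ)
    (hu_mono : Mono u)
    (hcs_pos : ∀ i, 0 < cs i) (hc : ∀ S, c S = ∑ i ∈ S, cs i)
    (π : List (Fin n)) (hπ : IsPermList π)
    (i j : ℕ) (hji : j < i) (hin : i ≤ n) :
    objective u c (moveList π i j) ≤ pseudoObj u cs (pseudoNeighbor π i j) ∧
      ((∀ L', IsMoveNeighbor π L' → objective u c π ≤ objective u c L') →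
        LocallyOptimalInsertions u c cs π) := by
  have key : ∀ i j, j < i → i ≤ n →
      objective u c (moveList π i j) ≤ pseudoObj u cs (pseudoNeighbor π i j) :=
    fun i j hji hin => objective_moveList_le_pseudoObj u c cs hu_mono (fun k => (hcs_pos k).le)
      hc hπ.1 hji (hin.trans_eq hπ.length_eq.symm)
  refine ⟨key i j hji hin, fun hmove i' j' hj' hji' hin' => ?_⟩
  exact (hmove _ ⟨i', j', by omega, hin', hj', by omega, by omega, rfl⟩).trans (key i' j' hji' hin')

theorem move_neighbor_le_pseudo_neighbor (n : ℕ) [NeZero n]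
    (u c : Finset (Fin n) → ℝ) (cs : Fin n → ℝ)
    (hu0 : u ∅ = 0) (hu_nonneg : ∀ S, 0 ≤ u S) (hu_mono : Mono u)
    (hcs_pos : ∀ i, 0 < cs i) (hc : ∀ S, c S = ∑ i ∈ S, cs i)
    (π : List (Fin n)) (hπ : IsPermList π)
    (i j : ℕ) (hj1 : 1 ≤ j) (hji : j < i) (hin : i ≤ n) :
    objective u c (moveList π i j) ≤ pseudoObj u cs (pseudoNeighbor π i j) ∧
      ((∀ L', IsMoveNeighbor π L' → objective u c π ≤ objective u c L') →
        LocallyOptimalInsertions u c cs π) :=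
  move_neighbor_le_pseudo_neighbor_general n u c cs hu_mono hcs_pos hc π hπ i j hji hin
end
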